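/- Under the conditions of Proposition 1 — the stoichiometric matrix satisfies the necessary well-formedness conditions, each vertex set Tᵢ of a connected component of the ST-graph contains exactly one term active in the initial configuration, and for each action π at most one Tᵢ-term occurs in react(π) — each Tᵢ is a switching therapy, i.e. satisfies: (1) #(Tᵢ, C) = 1; (2) for all π, #(Tᵢ, react(π)) = #(Tᵢ, prod(π)) ≤ 1; (3) for all π, if U₁ ∈ react(π) ∩ Tᵢ and U₂ ∈ prod(π) ∩ Tᵢ with U₁ ≠ U₂ then react(π) = {U₁} and prod(π) = {U₂}. -/
import Mathlib


/-- Proposition 1: if the stoichiometric matrix satisfies the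
necessary well-formedness conditions, each vertex set `Ti` of a connected
component of the ST-graph contains exactly one term active in the initial
combination `C`, and each action involves at most one `Ti`-term among its
reactants, then `Ti` is a switching therapy. -/
theorem stmt_4 {P Act : Type*} [DecidableEq P]
    (T : Finset P) (react prod : Act → Multiset P) (C : Multiset P)
    (M : P → Act → ℤ)
    (hM : ∀ (U : P) (π : Act),
      M U π = ((prod π).count U : ℤ) - ((react π).count U : ℤ))
    -- necessary conditions for well-formedness
    (hEntries : ∀ U ∈ T, ∀ π : Act, M U π ∈ ({-1, 0, 1} : Set ℤ))
    (hCons : ∀ π : Act, ∑ U ∈ T, M U π = 0)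
    (hExcl1 : ∀ (π : Act), ∀ U ∈ T, ∀ V ∈ T, M U π = -1 → M V π = -1 → U = V)
    (hExcl2 : ∀ (π : Act), ∀ U ∈ T, M U π = -1 →
      (∀ X : P, X ∉ T → M X π = 0) ∧ react π = {U})
    -- edge relation of the ST-graph
    (E : P → P → Prop)
    (hE : ∀ U V : P, E U V ↔ U ∈ T ∧ V ∈ T ∧ ∃ π : Act, M U π = -1 ∧ M V π = 1)
    -- Ti is the vertex set of a connected component of the ST-graph
    (Ti : Finset P) (U₀ : P) (hU₀ : U₀ ∈ T)
    (hTi : ∀ V : P, V ∈ Ti ↔ V ∈ T ∧ Relation.EqvGen E U₀ V)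
    -- condition 2 of the proposition: exactly one Ti-term active initially
    (hInit : ∑ U ∈ Ti, C.count U = 1)
    -- condition 3 of the proposition: at most one Ti-term among reactants
    (hReact : ∀ π : Act, ∑ U ∈ Ti, (react π).count U ≤ 1) :
    -- Ti is a switching therapy:
    (∑ U ∈ Ti, C.count U = 1) ∧
    (∀ π : Act, ∑ U ∈ Ti, (react π).count U = ∑ U ∈ Ti, (prod π).count U ∧
      ∑ U ∈ Ti, (react π).count U ≤ 1) ∧
    (∀ (π : Act), ∀ U₁ ∈ Ti, ∀ U₂ ∈ Ti, U₁ ∈ react π → U₂ ∈ prod π →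
      U₁ ≠ U₂ → react π = {U₁} ∧ prod π = {U₂}) := by
  have hTiT : ∀ V ∈ Ti, V ∈ T := fun V hV => ((hTi V).1 hV).1
  -- membership in Ti is stable along edges
  have hEsymm : ∀ U V, E U V → (U ∈ Ti ↔ V ∈ Ti) := by
    intro U V hUV
    obtain ⟨hU, hV, -⟩ := (hE U V).1 hUV
    constructor
    · intro h
      exact (hTi V).2 ⟨hV, Relation.EqvGen.trans _ _ _ ((hTi U).1 h).2
        (Relation.EqvGen.rel _ _ hUV)⟩
    · intro h
      exact (hTi U).2 ⟨hU, Relation.EqvGen.trans _ _ _ ((hTi V).1 h).2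
        (Relation.EqvGen.symm _ _ (Relation.EqvGen.rel _ _ hUV))⟩
  -- key structure: if M U π = -1 with U ∈ T, there is a unique +1 entry
  have hKey : ∀ (π : Act), ∀ U ∈ T, M U π = -1 →
      ∃ V ∈ T.erase U, M V π = 1 ∧ ∀ W ∈ T.erase U, W ≠ V → M W π = 0 := by
    intro π U hU hMU
    have hval : ∀ W ∈ T.erase U, M W π = 0 ∨ M W π = 1 := by
      intro W hW
      obtain ⟨hWU, hWT⟩ := Finset.mem_erase.1 hW
      have h := hEntries W hWT π
      simp only [Set.mem_insert_iff, Set.mem_singleton_iff] at h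
      rcases h with h | h | h
      · exact absurd (hExcl1 π W hWT U hU h hMU) hWU
      · exact Or.inl h
      · exact Or.inr h
    have hpos : ∀ W ∈ T.erase U, 0 ≤ M W π := by
      intro W hW; rcases hval W hW with h | h <;> omega
    have hsum' : ∑ W ∈ T.erase U, M W π = 1 := by
      have h := hCons π
      rw [← Finset.add_sum_erase T _ hU, hMU] at h
      omega
    have hne : ∃ V ∈ T.erase U, M V π ≠ 0 := by
      by_contra hc
      push_neg at hc
      rw [Finset.sum_eq_zero hc] at hsum'
      omega
    obtain ⟨V, hV, hVne⟩ := hne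
    have hMV : M V π = 1 := by rcases hval V hV with h | h <;> omega
    refine ⟨V, hV, hMV, ?_⟩
    have hzero : ∑ W ∈ (T.erase U).erase V, M W π = 0 := by
      rw [← Finset.add_sum_erase _ _ hV, hMV] at hsum'
      omega
    intro W hW hWV
    have hmem : W ∈ (T.erase U).erase V := Finset.mem_erase.2 ⟨hWV, hW⟩
    exact (Finset.sum_eq_zero_iff_of_nonneg
      (fun X hX => hpos X (Finset.mem_of_mem_erase hX))).1 hzero W hmem
  -- the stoichiometric matrix sums to zero over Ti
  have hSumM : ∀ π : Act, ∑ U ∈ Ti, M U π = 0 := by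
    intro π
    by_cases hneg : ∃ U ∈ T, M U π = -1
    · obtain ⟨U, hU, hMU⟩ := hneg
      obtain ⟨V, hV, hMV, hzero⟩ := hKey π U hU hMU
      obtain ⟨hVU, hVT⟩ := Finset.mem_erase.1 hV
      have hedge : E U V := (hE U V).2 ⟨hU, hVT, π, hMU, hMV⟩
      by_cases hUTi : U ∈ Ti
      · have hVTi : V ∈ Ti := (hEsymm U V hedge).1 hUTi
        have hVmem : V ∈ Ti.erase U := Finset.mem_erase.2 ⟨hVU, hVTi⟩
        rw [← Finset.add_sum_erase Ti _ hUTi, hMU,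
          ← Finset.add_sum_erase _ _ hVmem, hMV]
        have h0 : ∑ W ∈ (Ti.erase U).erase V, M W π = 0 := by
          apply Finset.sum_eq_zero
          intro W hW
          obtain ⟨hWV, hW'⟩ := Finset.mem_erase.1 hW
          obtain ⟨hWU, hWTi⟩ := Finset.mem_erase.1 hW'
          exact hzero W (Finset.mem_erase.2 ⟨hWU, hTiT W hWTi⟩) hWV
        rw [h0]; ring
      · have hVTi : V ∉ Ti := fun h => hUTi ((hEsymm U V hedge).2 h)
        apply Finset.sum_eq_zero
        intro W hW
        have hWU : W ≠ U := by rintro rfl; exact hUTi hW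
        have hWV : W ≠ V := by rintro rfl; exact hVTi hW
        exact hzero W (Finset.mem_erase.2 ⟨hWU, hTiT W hW⟩) hWV
    · push_neg at hneg
      have hz : ∀ U ∈ T, M U π = 0 := by
        have hpos : ∀ U ∈ T, 0 ≤ M U π := by
          intro U hU
          have h := hEntries U hU π
          simp only [Set.mem_insert_iff, Set.mem_singleton_iff] at h
          rcases h with h | h | h
          · exact absurd h (hneg U hU)
          · omega
          · omega
        exact (Finset.sum_eq_zero_iff_of_nonneg hpos).1 (hCons π)
      exact Finset.sum_eq_zero fun W hW => hz W (hTiT W hW)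
  -- condition (2): react and prod sums over Ti agree
  have h2 : ∀ π : Act, ∑ U ∈ Ti, (react π).count U = ∑ U ∈ Ti, (prod π).count U := by
    intro π
    have h' : ∑ U ∈ Ti, (((prod π).count U : ℤ) - ((react π).count U : ℤ)) = 0 := by
      rw [← hSumM π]
      exact Finset.sum_congr rfl fun U _ => (hM U π).symm
    rw [Finset.sum_sub_distrib] at h'
    have hcast : (∑ U ∈ Ti, ((react π).count U : ℤ)) = ∑ U ∈ Ti, ((prod π).count U : ℤ) := by
      omega
    exact_mod_cast hcast
  refine ⟨hInit, fun π => ⟨h2 π, hReact π⟩, ?_⟩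
  -- condition (3)
  intro π U₁ hU₁ U₂ hU₂ hU₁r hU₂p hne
  have hU₁T : U₁ ∈ T := hTiT _ hU₁
  have hU₂T : U₂ ∈ T := hTiT _ hU₂
  have hc₁ : 1 ≤ (react π).count U₁ := Multiset.one_le_count_iff_mem.2 hU₁r
  have hc₂ : 1 ≤ (prod π).count U₂ := Multiset.one_le_count_iff_mem.2 hU₂p
  have hle₁ : (react π).count U₁ ≤ ∑ U ∈ Ti, (react π).count U :=
    Finset.single_le_sum (f := fun U => (react π).count U) (fun U _ => Nat.zero_le _) hU₁
  have hle₂ : (prod π).count U₂ ≤ ∑ U ∈ Ti, (prod π).count U :=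
    Finset.single_le_sum (f := fun U => (prod π).count U) (fun U _ => Nat.zero_le _) hU₂
  have hrsum : ∑ U ∈ Ti, (react π).count U = 1 := le_antisymm (hReact π) (hc₁.trans hle₁)
  have hpsum : ∑ U ∈ Ti, (prod π).count U = 1 := by rw [← h2 π]; exact hrsum
  have hcr₁ : (react π).count U₁ = 1 := le_antisymm (hrsum ▸ hle₁) hc₁
  have hcp₂ : (prod π).count U₂ = 1 := le_antisymm (hpsum ▸ hle₂) hc₂
  -- prod count of U₁ over Ti is 0
  have hcp₁ : (prod π).count U₁ = 0 := by
    have h0 : ∑ U ∈ Ti.erase U₂, (prod π).count U = 0 := by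
      have h := Finset.sum_erase_add Ti (fun U => (prod π).count U) hU₂
      omega
    exact (Finset.sum_eq_zero_iff).1 h0 U₁ (Finset.mem_erase.2 ⟨hne, hU₁⟩)
  have hMU₁ : M U₁ π = -1 := by rw [hM U₁ π, hcr₁, hcp₁]; ring
  obtain ⟨hoff, hreq⟩ := hExcl2 π U₁ hU₁T hMU₁
  have hcr₂ : (react π).count U₂ = 0 := by
    rw [hreq, Multiset.count_singleton, if_neg hne.symm]
  have hMU₂ : M U₂ π = 1 := by rw [hM U₂ π, hcp₂, hcr₂]; ring
  refine ⟨hreq, ?_⟩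
  obtain ⟨V, hV, hMV, hzero⟩ := hKey π U₁ hU₁T hMU₁
  have hVU₂ : V = U₂ := by
    by_contra hc
    have := hzero U₂ (Finset.mem_erase.2 ⟨hne.symm, hU₂T⟩) (Ne.symm hc)
    omega
  rw [hVU₂] at hzero
  -- show prod π = {U₂} by counting
  ext X
  rw [Multiset.count_singleton]
  by_cases hX : X = U₂
  · rw [if_pos hX, hX, hcp₂]
  · rw [if_neg hX]
    by_cases hXT : X ∈ T
    · by_cases hXU₁ : X = U₁
      · rw [hXU₁]; exact hcp₁
      · have hMX : M X π = 0 :=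
          hzero X (Finset.mem_erase.2 ⟨hXU₁, hXT⟩) hX
        have hrX : (react π).count X = 0 := by
          rw [hreq, Multiset.count_singleton, if_neg hXU₁]
        rw [hM X π, hrX] at hMX
        omega
    · have hMX : M X π = 0 := hoff X hXT
      have hXU₁ : X ≠ U₁ := by rintro rfl; exact hXT hU₁T
      have hrX : (react π).count X = 0 := by
        rw [hreq, Multiset.count_singleton, if_neg hXU₁]
      rw [hM X π, hrX] at hMX
      omega
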